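/- arXiv:1807.04010 — 7 statements merged into one kernel-verified Lean document; each statement's English description precedes it below -/
import Mathlib

section
/- In a DAG, if a node R is a leaf (has no outgoing edges) and two distinct nodes X and Y (both different from R) are d-separated by a set Z together with {R}, where R ∉ Z and X, Y ∉ Z, then X and Y are d-separated by Z alone. -/
/-- A directed graph (edge relation) is acyclic. -/
def IsAcyclic {α : Type*} (G : α → α → Prop) : Prop :=
  ∀ v, ¬ Relation.TransGen G v v

/-- A leaf node: no outgoing edges. -/
def IsLeaf {α : Type*} (G : α → α → Prop) (v : α) : Prop :=
  ∀ w, ¬ G v w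

/-- An undirected path from `x` to `y`: a list of at least two distinct vertices,
starting at `x`, ending at `y`, consecutive vertices adjacent (in either direction). -/
def IsUPath {α : Type*} (G : α → α → Prop) (x y : α) (p : List α) : Prop :=
  2 ≤ p.length ∧ p.head? = some x ∧ p.getLast? = some y ∧ p.Nodup ∧
    p.Chain' (fun a b => G a b ∨ G b a)

/-- The vertex at (interior) position `i` of `p` is a collider:
both adjacent path edges point into it. -/
def ColliderAt {α : Type*} (G : α → α → Prop) (p : List α) (i : ℕ) : Prop :=
  ∃ a b c, p[i-1]? = some a ∧ p[i]? = some b ∧ p[i+1]? = some c ∧ G a b ∧ G c b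

/-- A path is active given conditioning set `S`: every interior collider is in `S`
or has a descendant in `S`, and every interior non-collider is not in `S`. -/
def ActivePath {α : Type*} (G : α → α → Prop) (S : Set α) (x y : α) (p : List α) : Prop :=
  IsUPath G x y p ∧
    ∀ i, 0 < i → i + 1 < p.length →
      ∀ b, p[i]? = some b →
        (ColliderAt G p i → b ∈ S ∨ ∃ d ∈ S, Relation.ReflTransGen G b d) ∧
        (¬ ColliderAt G p i → b ∉ S)

/-- d-separation: no active undirected path between `x` and `y` given `S`. -/
def DSep {α : Type*} (G : α → α → Prop) (x y : α) (S : Set α) : Prop :=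
  ∀ p : List α, ¬ ActivePath G S x y p

section

variable {α : Type*} {G : α → α → Prop}

theorem colliderAt_of_isLeaf {p : List α} (hp : p.IsChain (fun a b => G a b ∨ G b a)) {i : ℕ}
    (hi₀ : 0 < i) (hi : i + 1 < p.length) {r : α} (hr : p[i]? = some r) (hleaf : IsLeaf G r) :
    ColliderAt G p i := by
  have hri : p[i] = r := by simpa [List.getElem?_eq_getElem (by omega : i < p.length)] using hr
  have hedge := List.isChain_iff_getElem.mp hp
  have hprev := hedge (i - 1) (by omega)
  have hnext := hedge i hi
  simp only [Nat.sub_add_cancel hi₀, hri] at hprev hnext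
  exact ⟨p[i - 1], r, p[i + 1], by simp [List.getElem?_eq_getElem (by omega : i - 1 < p.length)],
    hr, by simp [List.getElem?_eq_getElem hi], hprev.resolve_right (hleaf _),
    hnext.resolve_left (hleaf _)⟩

/-- An interior leaf is a collider, and enlarging the conditioning set never blocks a collider. -/
theorem ActivePath.union_of_isLeaf {S T : Set α} {x y : α} {p : List α}
    (hp : ActivePath G S x y p) (hT : ∀ r ∈ T, IsLeaf G r) : ActivePath G (S ∪ T) x y p := by
  obtain ⟨hpath, hinterior⟩ := hp
  refine ⟨hpath, fun i hi₀ hi b hb => ⟨fun hcol => ?_, fun hncol hbST => ?_⟩⟩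
  · rcases (hinterior i hi₀ hi b hb).1 hcol with hbS | ⟨d, hdS, hbd⟩
    · exact Or.inl (Or.inl hbS)
    · exact Or.inr ⟨d, Or.inl hdS, hbd⟩
  · rcases hbST with hbS | hbT
    · exact (hinterior i hi₀ hi b hb).2 hncol hbS
    · exact hncol (colliderAt_of_isLeaf hpath.2.2.2.2 hi₀ hi hb (hT b hbT))

theorem DSep.of_union_isLeaf {S T : Set α} {x y : α} (h : DSep G x y (S ∪ T))
    (hT : ∀ r ∈ T, IsLeaf G r) : DSep G x y S :=
  fun p hp => h p (hp.union_of_isLeaf hT)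

end

theorem dsep_of_dsep_union_leaf_general {α : Type*} (G : α → α → Prop)
    (R X Y : α) (Z : Set α) (hleaf : IsLeaf G R)
    (h : DSep G X Y (Z ∪ {R})) : DSep G X Y Z :=
  h.of_union_isLeaf fun _ hr => hr ▸ hleaf

/-- In a DAG, if `R` is a leaf node and distinct nodes `X`, `Y`
(both different from `R`, none in `Z`, `R ∉ Z`) are d-separated by `Z ∪ {R}`,
then they are d-separated by `Z` alone. -/
theorem dsep_of_dsep_union_leaf {α : Type*} (G : α → α → Prop) (hG : IsAcyclic G)
    (R X Y : α) (Z : Set α) (hleaf : IsLeaf G R)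
    (hXY : X ≠ Y) (hXR : X ≠ R) (hYR : Y ≠ R)
    (hRZ : R ∉ Z) (hXZ : X ∉ Z) (hYZ : Y ∉ Z)
    (h : DSep G X Y (Z ∪ {R})) : DSep G X Y Z :=
  dsep_of_dsep_union_leaf_general G R X Y Z hleaf h
end

section
/- In a DAG where all nodes of a set R are leaves, if X and Y are connected by an active path given conditioning set Z ∪ R_K (with R_K ⊆ R) but no active path given Z, then any active path given Z ∪ R_K must contain a collider C such that C ∈ R_K or C has a descendant in R_K, and moreover C's collider status is unblocked only because of R_K. -/
/-- if all nodes of `R` are leaves, `R_K ⊆ R`, and `X` and `Y` have an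
active path given `Z ∪ R_K` but none given `Z`, then every active path given `Z ∪ R_K`
contains an interior collider `C` such that `C ∈ R_K` or `C` has a descendant in `R_K`,
and moreover `C` is not unblocked by `Z` itself (neither `C` nor any descendant of `C`
is in `Z`). -/
theorem active_path_has_collider_unblocked_only_by_RK {α : Type*} (G : α → α → Prop)
    (hG : IsAcyclic G) (R : Set α) (hleaf : ∀ r ∈ R, IsLeaf G r)
    (RK : Set α) (hRK : RK ⊆ R) (X Y : α) (Z : Set α)
    (hconn : ∃ p, ActivePath G (Z ∪ RK) X Y p)
    (hsep : DSep G X Y Z) :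
    ∀ p, ActivePath G (Z ∪ RK) X Y p →
      ∃ i, 0 < i ∧ i + 1 < p.length ∧ ColliderAt G p i ∧
        ∀ C, p[i]? = some C →
          (C ∈ RK ∨ ∃ d ∈ RK, Relation.ReflTransGen G C d) ∧
          ¬ (C ∈ Z ∨ ∃ d ∈ Z, Relation.ReflTransGen G C d) := by
  intro p hp
  have hup := hp.1
  have hZ : ¬ ActivePath G Z X Y p := hsep p
  unfold ActivePath at hZ
  push_neg at hZ
  obtain ⟨i, hi0, hi1, b, hb, hfail⟩ := hZ hup
  by_cases hcol : ColliderAt G p i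
  · -- collider case: the Z-condition must fail
    have hA : ¬ (b ∈ Z ∨ ∃ d ∈ Z, Relation.ReflTransGen G b d) := by
      intro h
      exact (hfail (fun _ => h)).1 hcol
    refine ⟨i, hi0, hi1, hcol, ?_⟩
    intro C hC
    have hCb : b = C := by
      rw [hC] at hb; exact (Option.some_injective _ hb).symm
    subst hCb
    have hUnion := (hp.2 i hi0 hi1 b hb).1 hcol
    constructor
    · rcases hUnion with h | ⟨d, hd, hreach⟩
      · rcases h with h | h
        · exact absurd (Or.inl h) hA
        · exact Or.inl h
      · rcases hd with hd | hd
        · exact absurd (Or.inr ⟨d, hd, hreach⟩) hA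
        · exact Or.inr ⟨d, hd, hreach⟩
    · exact hA
  · -- non-collider case: contradiction with Z∪RK activity
    exfalso
    have hBZ : b ∈ Z := by
      exact (hfail (fun h => absurd h hcol)).2
    exact (hp.2 i hi0 hi1 b hb).2 hcol (Or.inl hBZ)
end

section
/- Density-ratio/IPW identity: Let V be a random vector and R = (R_1, ..., R_k) a vector of binary missingness indicators such that for each i, R_i ⫫ (V, R_{-i}) | Pa_i where Pa_i is a measurable function of V, and P(R = 0 | V) = ∏_i P(R_i = 0 | Pa_i) > 0 a.s. Then the law of V satisfies dP_V / dP_{V | R=0}(v) = P(R = 0) / ∏_i P(R_i = 0 | Pa_i = pa_i(v)) wherever defined; equivalently P(V ∈ A) = E[1_{V ∈ A} 1_{R=0}] / ∏_i P(R_i = 0 | Pa_i). -/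
open MeasureTheory ProbabilityTheory
open scoped ENNReal

/-!
The propensity `π = ∏ i, P(R i = 0 | Pa i)` is a `σ(V)`-measurable version of `P(R = 0 | V)`.
Hence, by the tower property (here: the disintegration of `μ` along `σ(V)` by `condExpKernel`),
`E[1_{V ∈ A} 1_{R = 0} / π] = E[1_{V ∈ A} P(R = 0 | V) / π] = P(V ∈ A)`, the division being
harmless because `π > 0` a.s.
-/

section
variable {Ω : Type*} {m : MeasurableSpace Ω} [mΩ : MeasurableSpace Ω] [StandardBorelSpace Ω]
  {μ : Measure Ω} [IsFiniteMeasure μ]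

theorem lintegral_mul_condExpKernel_apply (hm : m ≤ mΩ) {g : Ω → ℝ≥0∞} (hg : Measurable[m] g)
    {s : Set Ω} (hs : MeasurableSet s) :
    ∫⁻ ω, g ω * condExpKernel μ m ω s ∂μ = ∫⁻ ω in s, g ω ∂μ := by
  have hf : Measurable[m.prod mΩ] fun p : Ω × Ω => g p.1 * s.indicator 1 p.2 :=
    (hg.comp measurable_fst).mul ((measurable_one.indicator hs).comp measurable_snd)
  calc ∫⁻ ω, g ω * condExpKernel μ m ω s ∂μ
      = ∫⁻ ω, g ω * condExpKernel μ m ω s ∂(μ.trim hm) :=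
        (lintegral_trim hm (hg.mul (measurable_condExpKernel hs))).symm
    _ = ∫⁻ p, g p.1 * s.indicator 1 p.2 ∂(μ.trim hm ⊗ₘ condExpKernel μ m) := by
        rw [Measure.lintegral_compProd hf]
        simp only [lintegral_const_mul _ (measurable_one.indicator hs), lintegral_indicator_one hs]
    _ = ∫⁻ ω, g ω * s.indicator 1 ω ∂μ := by
        have hdiag : @Measurable Ω (Ω × Ω) mΩ (m.prod mΩ) Function.diag :=
          (measurable_id'' hm).prodMk measurable_id
        rw [compProd_trim_condExpKernel, @lintegral_map _ _ mΩ (m.prod mΩ) _ _ _ hf hdiag]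
        rfl
    _ = ∫⁻ ω in s, g ω ∂μ := by
        rw [← lintegral_indicator hs]
        exact lintegral_congr fun ω => by by_cases h : ω ∈ s <;> simp [h]

theorem measure_eq_lintegral_indicator_div_of_condExpKernel_eq (hm : m ≤ mΩ) {s t : Set Ω}
    (hs : MeasurableSet s) (ht : MeasurableSet[m] t) {w : Ω → ℝ≥0∞} (hw : Measurable[m] w)
    (hκw : ∀ᵐ ω ∂μ, condExpKernel μ m ω s = w ω) (hw0 : ∀ᵐ ω ∂μ, w ω ≠ 0) :
    μ t = ∫⁻ ω, (t ∩ s).indicator (fun _ => 1) ω / w ω ∂μ := by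
  calc μ t = ∫⁻ ω, t.indicator (fun _ => 1) ω / w ω * condExpKernel μ m ω s ∂μ := by
        rw [← lintegral_indicator_one (hm t ht)]
        refine lintegral_congr_ae ?_
        filter_upwards [hκw, hw0] with ω hκω hω0
        rw [hκω, ENNReal.div_mul_cancel hω0 (hκω ▸ measure_ne_top _ s)]
        rfl
    _ = ∫⁻ ω in s, t.indicator (fun _ => 1) ω / w ω ∂μ :=
        lintegral_mul_condExpKernel_apply hm ((measurable_const.indicator ht).div hw) hs
    _ = ∫⁻ ω, (t ∩ s).indicator (fun _ => 1) ω / w ω ∂μ := by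
        rw [← lintegral_indicator hs]
        exact lintegral_congr fun ω => by
          by_cases hωs : ω ∈ s <;> by_cases hωt : ω ∈ t <;> simp [hωs, hωt]

end

theorem ipw_recoverability_general
    {Ω : Type*} [MeasurableSpace Ω] [StandardBorelSpace Ω]
    (μ : Measure Ω) [IsProbabilityMeasure μ]
    {𝓥 βP : Type*} [MeasurableSpace 𝓥] [MeasurableSpace βP]
    (k : ℕ) (V : Ω → 𝓥) (R : Fin k → Ω → Bool) (pa : Fin k → 𝓥 → βP)
    (hV : Measurable V) (hR : ∀ i, Measurable (R i)) (hpa : ∀ i, Measurable (pa i))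
    -- the missingness probability factorizes and is a.s. positive
    (hfact : ∀ᵐ ω ∂μ,
      condExpKernel μ (MeasurableSpace.comap V inferInstance) ω
          {ω' | ∀ i, R i ω' = false} =
        ∏ i : Fin k, condExpKernel μ
          (MeasurableSpace.comap (fun ω'' => pa i (V ω'')) inferInstance) ω
          {ω' | R i ω' = false} ∧
      ∀ i : Fin k, 0 < condExpKernel μ
        (MeasurableSpace.comap (fun ω'' => pa i (V ω'')) inferInstance) ω
        {ω' | R i ω' = false}) :
    ∀ A : Set 𝓥, MeasurableSet A →
      μ (V ⁻¹' A) =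
        ∫⁻ ω, ((V ⁻¹' A ∩ {ω' | ∀ i, R i ω' = false}).indicator
            (fun _ => (1 : ℝ≥0∞)) ω) /
          (∏ i : Fin k, condExpKernel μ
            (MeasurableSpace.comap (fun ω'' => pa i (V ω'')) inferInstance) ω
            {ω' | R i ω' = false}) ∂μ := by
  intro A hA
  have hVV : Measurable[MeasurableSpace.comap V inferInstance] V := comap_measurable V
  have hmissing : MeasurableSet {ω | ∀ i, R i ω = false} := by
    simp only [Set.ofPred_forall]
    exact .iInter fun i => hR i (measurableSet_singleton false)
  have hpropensity : Measurable[MeasurableSpace.comap V inferInstance] fun ω =>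
      ∏ i : Fin k, condExpKernel μ
        (MeasurableSpace.comap (fun ω'' => pa i (V ω'')) inferInstance) ω
        {ω' | R i ω' = false} :=
    Finset.measurable_prod _ fun i _ =>
      (measurable_condExpKernel (hR i (measurableSet_singleton false))).mono
        ((hpa i).comp hVV).comap_le le_rfl
  exact measure_eq_lintegral_indicator_div_of_condExpKernel_eq hV.comap_le hmissing (hVV hA)
    hpropensity (hfact.mono fun _ h => h.1)
    (hfact.mono fun _ h => Finset.prod_ne_zero_iff.mpr fun i _ => (h.2 i).ne')

/-- density-ratio/IPW identity, Equation 4: let `V` be a random vector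
and `R i` (`i : Fin k`) binary missingness indicators such that each `R i` is
conditionally independent of `(V, R_{-i})` given its parents `Pa i = pa i ∘ V`, and
`P(R = 0 | V) = ∏ i, P(R i = 0 | Pa i) > 0` a.s. Then the law of `V` is recovered by
inverse-probability weighting of the fully observed records:
`P(V ∈ A) = E[ 1_{V ∈ A} 1_{R = 0} / ∏ i, P(R i = 0 | Pa i) ]`. -/
theorem ipw_recoverability
    {Ω : Type*} [MeasurableSpace Ω] [StandardBorelSpace Ω] [Nonempty Ω]
    (μ : Measure Ω) [IsProbabilityMeasure μ]
    {𝓥 βP : Type*} [MeasurableSpace 𝓥] [MeasurableSpace βP]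
    (k : ℕ) (V : Ω → 𝓥) (R : Fin k → Ω → Bool) (pa : Fin k → 𝓥 → βP)
    (hV : Measurable V) (hR : ∀ i, Measurable (R i)) (hpa : ∀ i, Measurable (pa i))
    -- each `R i` is conditionally independent of `(V, R_{-i})` given `Pa i`
    (hCI : ∀ i : Fin k,
      CondIndepFun (MeasurableSpace.comap (fun ω => pa i (V ω)) inferInstance)
        (((hpa i).comp hV).comap_le) (R i)
        (fun ω => (V ω, fun j : {j : Fin k // j ≠ i} => R (j : Fin k) ω)) μ)
    -- the missingness probability factorizes and is a.s. positive
    (hfact : ∀ᵐ ω ∂μ,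
      condExpKernel μ (MeasurableSpace.comap V inferInstance) ω
          {ω' | ∀ i, R i ω' = false} =
        ∏ i : Fin k, condExpKernel μ
          (MeasurableSpace.comap (fun ω'' => pa i (V ω'')) inferInstance) ω
          {ω' | R i ω' = false} ∧
      ∀ i : Fin k, 0 < condExpKernel μ
        (MeasurableSpace.comap (fun ω'' => pa i (V ω'')) inferInstance) ω
        {ω' | R i ω' = false}) :
    ∀ A : Set 𝓥, MeasurableSet A →
      μ (V ⁻¹' A) =
        ∫⁻ ω, ((V ⁻¹' A ∩ {ω' | ∀ i, R i ω' = false}).indicator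
            (fun _ => (1 : ℝ≥0∞)) ω) /
          (∏ i : Fin k, condExpKernel μ
            (MeasurableSpace.comap (fun ω'' => pa i (V ω'')) inferInstance) ω
            {ω' | R i ω' = false}) ∂μ :=
  ipw_recoverability_general μ k V R pa hV hR hpa hfact
end

section
/- MCAR validity of test-wise deletion: Let X, Y, Z be random variables and R a binary indicator with (X, Y, Z) ⫫ R. Then X ⫫ Y | Z if and only if X ⫫ Y | (Z, R); in particular, X ⫫ Y | Z holds iff X ⫫ Y | Z under the conditional measure P(· | R = 0), assuming P(R = 0) > 0. -/
open MeasureTheory ProbabilityTheory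

/-!
Let `𝓕 = σ(X, Y, Z)`. Conditional independence of `X` and `Y` given `𝓖 ≤ 𝓕` is a statement
about the conditional expectations `μ⟦A | 𝓖⟧` of events `A ∈ 𝓕`. As `σ(R)` is independent of `𝓕`,
adjoining it to `σ(Z)` does not change these conditional expectations: their set integrals agree on
the π-system of sets `B ∩ C` with `B ∈ σ(Z)`, `C ∈ σ(R)`, where independence factors out `μ C`.
Conditioning on the event `{R = false}` does not change `μ` on `𝓕` at all, hence neither the
conditional expectations given `σ(Z)` nor the `σ(Z)`-measurable null sets.
-/

open MeasurableSpace Set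

lemma Filter.EventuallyEq.eventuallyEq_mul_iff {α β : Type*} [Mul β] {l : Filter α}
    {f₁ f₂ f₃ g₁ g₂ g₃ : α → β} (h₁ : f₁ =ᶠ[l] g₁) (h₂ : f₂ =ᶠ[l] g₂) (h₃ : f₃ =ᶠ[l] g₃) :
    (f₁ =ᶠ[l] fun x => f₂ x * f₃ x) ↔ g₁ =ᶠ[l] fun x => g₂ x * g₃ x :=
  ⟨fun h => h₁.symm.trans (h.trans (h₂.mul h₃)), fun h => h₁.trans (h.trans (h₂.mul h₃).symm)⟩

lemma MeasurableSpace.isPiSystem_image2_inter {Ω : Type*} (m₁ m₂ : MeasurableSpace Ω) :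
    IsPiSystem (image2 (· ∩ ·) {s | MeasurableSet[m₁] s} {t | MeasurableSet[m₂] t}) := by
  rintro _ ⟨s₁, hs₁, t₁, ht₁, rfl⟩ _ ⟨s₂, hs₂, t₂, ht₂, rfl⟩ -
  exact ⟨s₁ ∩ s₂, hs₁.inter hs₂, t₁ ∩ t₂, ht₁.inter ht₂, inter_inter_inter_comm _ _ _ _⟩

lemma MeasurableSpace.generateFrom_image2_inter {Ω : Type*} (m₁ m₂ : MeasurableSpace Ω) :
    generateFrom (image2 (· ∩ ·) {s | MeasurableSet[m₁] s} {t | MeasurableSet[m₂] t}) =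
      m₁ ⊔ m₂ := by
  refine le_antisymm (generateFrom_le ?_) (sup_le (fun s hs => ?_) (fun t ht => ?_))
  · rintro _ ⟨s, hs, t, ht, rfl⟩
    exact (le_sup_left (b := m₂) s hs).inter (le_sup_right (a := m₁) t ht)
  · exact measurableSet_generateFrom ⟨s, hs, univ, MeasurableSet.univ, inter_univ s⟩
  · exact measurableSet_generateFrom ⟨univ, MeasurableSet.univ, t, ht, univ_inter t⟩

namespace ProbabilityTheory

variable {Ω E : Type*} [NormedAddCommGroup E] [NormedSpace ℝ E]
  {mF mG mH : MeasurableSpace Ω} [mΩ : MeasurableSpace Ω] {μ : Measure Ω} [IsFiniteMeasure μ]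

theorem setIntegral_eq_measureReal_smul_integral_of_indep [CompleteSpace E] (hF : mF ≤ mΩ)
    (hH : mH ≤ mΩ) (hInd : Indep mF mH μ) {g : Ω → E} (hg : StronglyMeasurable[mF] g)
    (hgi : Integrable g μ) {t : Set Ω} (ht : MeasurableSet[mH] t) :
    ∫ x in t, g x ∂μ = μ.real t • ∫ x, g x ∂μ := by
  rw [← setIntegral_condExp hH hgi ht,
    setIntegral_congr_ae (hH _ ht) ((condExp_indep_eq hF hH hg hInd).mono fun _ h _ => h),
    setIntegral_const]

theorem setIntegral_inter_eq_measureReal_smul_setIntegral_of_indep [CompleteSpace E]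
    (hF : mF ≤ mΩ) (hH : mH ≤ mΩ) (hInd : Indep mF mH μ) {g : Ω → E} (hg : StronglyMeasurable[mF] g)
    (hgi : Integrable g μ) {s t : Set Ω} (hs : MeasurableSet[mF] s) (ht : MeasurableSet[mH] t) :
    ∫ x in s ∩ t, g x ∂μ = μ.real t • ∫ x in s, g x ∂μ := by
  rw [inter_comm, ← setIntegral_indicator (hF _ hs),
    setIntegral_eq_measureReal_smul_integral_of_indep hF hH hInd (hg.indicator hs)
      (hgi.indicator (hF _ hs)) ht, integral_indicator (hF _ hs)]

theorem condExp_sup_ae_eq_of_indep [CompleteSpace E] (hGF : mG ≤ mF) (hF : mF ≤ mΩ)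
    (hH : mH ≤ mΩ) (hInd : Indep mF mH μ) {f : Ω → E} (hf : StronglyMeasurable[mF] f)
    (hfi : Integrable f μ) :
    μ[f | mG ⊔ mH] =ᵐ[μ] μ[f | mG] := by
  have hG : mG ≤ mΩ := hGF.trans hF
  have hGH : mG ⊔ mH ≤ mΩ := sup_le hG hH
  refine (ae_eq_condExp_of_forall_setIntegral_eq hGH hfi
    (fun _ _ _ => integrable_condExp.integrableOn) (fun u hu _ => ?_)
    (stronglyMeasurable_condExp.mono (le_sup_left : mG ≤ mG ⊔ mH)).aestronglyMeasurable).symm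
  refine induction_on_inter (C := fun u _ => ∫ x in u, μ[f | mG] x ∂μ = ∫ x in u, f x ∂μ)
    (generateFrom_image2_inter mG mH).symm (isPiSystem_image2_inter mG mH) (by simp) ?_ ?_ ?_ u hu
  · rintro _ ⟨s, hs, t, ht, rfl⟩
    rw [setIntegral_inter_eq_measureReal_smul_setIntegral_of_indep hF hH hInd
        (stronglyMeasurable_condExp.mono hGF) integrable_condExp (hGF _ hs) ht,
      setIntegral_inter_eq_measureReal_smul_setIntegral_of_indep hF hH hInd hf hfi (hGF _ hs) ht,
      setIntegral_condExp hG hfi hs]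
  · intro u hu hu_eq
    rw [setIntegral_compl (hGH _ hu) integrable_condExp, setIntegral_compl (hGH _ hu) hfi, hu_eq,
      integral_condExp hG]
  · intro u hdisj hu hu_eq
    rw [integral_iUnion (fun i => hGH _ (hu i)) hdisj integrable_condExp.integrableOn,
      integral_iUnion (fun i => hGH _ (hu i)) hdisj hfi.integrableOn]
    exact tsum_congr hu_eq

theorem trim_cond_eq_of_indep (hF : mF ≤ mΩ) (hH : mH ≤ mΩ) (hInd : Indep mF mH μ) {t : Set Ω}
    (ht : MeasurableSet[mH] t) (ht₀ : μ t ≠ 0) : (μ[|t]).trim hF = μ.trim hF := by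
  refine @Measure.ext _ mF _ _ fun s hs => ?_
  rw [trim_measurableSet_eq hF hs, trim_measurableSet_eq hF hs, cond_apply (hH _ ht),
    inter_comm, (Indep_iff mF mH μ).1 hInd s t hs ht, mul_comm,
    ENNReal.mul_inv_cancel_right ht₀ (measure_ne_top μ t)]

theorem setIntegral_cond_eq_of_indep (hF : mF ≤ mΩ) (hH : mH ≤ mΩ) (hInd : Indep mF mH μ)
    {t : Set Ω} (ht : MeasurableSet[mH] t) (ht₀ : μ t ≠ 0) {g : Ω → E}
    (hg : StronglyMeasurable[mF] g) {s : Set Ω} (hs : MeasurableSet[mF] s) :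
    ∫ x in s, g x ∂μ[|t] = ∫ x in s, g x ∂μ := by
  rw [← integral_indicator (hF _ hs), ← integral_indicator (hF _ hs),
    integral_trim hF (hg.indicator hs) (μ := μ[|t]), integral_trim hF (hg.indicator hs) (μ := μ),
    trim_cond_eq_of_indep hF hH hInd ht ht₀]

theorem condExp_ae_eq_condExp_cond_of_indep [CompleteSpace E] (hGF : mG ≤ mF) (hF : mF ≤ mΩ)
    (hH : mH ≤ mΩ) (hInd : Indep mF mH μ) {t : Set Ω} (ht : MeasurableSet[mH] t) (ht₀ : μ t ≠ 0)
    {f : Ω → E} (hf : StronglyMeasurable[mF] f) (hfi : Integrable f μ) :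
    μ[f | mG] =ᵐ[μ[|t]] (μ[|t])[f | mG] := by
  have hG : mG ≤ mΩ := hGF.trans hF
  have integrable_cond {g : Ω → E} (hg : Integrable g μ) : Integrable g μ[|t] :=
    hg.integrableOn.smul_measure (ENNReal.inv_ne_top.2 ht₀)
  refine ae_eq_condExp_of_forall_setIntegral_eq hG (integrable_cond hfi)
    (fun _ _ _ => (integrable_cond integrable_condExp).integrableOn) (fun s hs _ => ?_)
    stronglyMeasurable_condExp.aestronglyMeasurable
  rw [setIntegral_cond_eq_of_indep hF hH hInd ht ht₀ (stronglyMeasurable_condExp.mono hGF)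
      (hGF _ hs), setIntegral_cond_eq_of_indep hF hH hInd ht ht₀ hf (hGF _ hs),
    setIntegral_condExp hG hfi hs]

section CondIndepFun

variable [StandardBorelSpace Ω] {β γ : Type*} [MeasurableSpace β] [MeasurableSpace γ]
  {X : Ω → β} {Y : Ω → γ}

theorem condIndepFun_iff_condIndepFun_sup_of_indep (hGF : mG ≤ mF) (hF : mF ≤ mΩ)
    (hH : mH ≤ mΩ) (hInd : Indep mF mH μ) (hX : Measurable[mF] X) (hY : Measurable[mF] Y) :
    CondIndepFun mG (hGF.trans hF) X Y μ ↔
      CondIndepFun (mG ⊔ mH) (sup_le (hGF.trans hF) hH) X Y μ := by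
  have key {A : Set Ω} (hA : MeasurableSet[mF] A) : μ⟦A | mG ⊔ mH⟧ =ᵐ[μ] μ⟦A | mG⟧ :=
    condExp_sup_ae_eq_of_indep hGF hF hH hInd (stronglyMeasurable_const.indicator hA)
      ((integrable_const 1).indicator (hF _ hA))
  rw [condIndepFun_iff_condExp_inter_preimage_eq_mul (hX.mono hF le_rfl) (hY.mono hF le_rfl),
    condIndepFun_iff_condExp_inter_preimage_eq_mul (hX.mono hF le_rfl) (hY.mono hF le_rfl)]
  exact forall₄_congr fun s u hs hu =>
    ((key ((hX hs).inter (hY hu))).eventuallyEq_mul_iff (key (hX hs)) (key (hY hu))).symm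

theorem condIndepFun_iff_condIndepFun_cond_of_indep (hGF : mG ≤ mF) (hF : mF ≤ mΩ)
    (hH : mH ≤ mΩ) (hInd : Indep mF mH μ) (hX : Measurable[mF] X) (hY : Measurable[mF] Y)
    {t : Set Ω} (ht : MeasurableSet[mH] t) (ht₀ : μ t ≠ 0) :
    CondIndepFun mG (hGF.trans hF) X Y μ ↔ CondIndepFun mG (hGF.trans hF) X Y μ[|t] := by
  have hG : mG ≤ mΩ := hGF.trans hF
  have key {A : Set Ω} (hA : MeasurableSet[mF] A) : μ⟦A | mG⟧ =ᵐ[μ[|t]] μ[|t]⟦A | mG⟧ :=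
    condExp_ae_eq_condExp_cond_of_indep hGF hF hH hInd ht ht₀
      (stronglyMeasurable_const.indicator hA) ((integrable_const 1).indicator (hF _ hA))
  rw [condIndepFun_iff_condExp_inter_preimage_eq_mul (hX.mono hF le_rfl) (hY.mono hF le_rfl),
    condIndepFun_iff_condExp_inter_preimage_eq_mul (hX.mono hF le_rfl) (hY.mono hF le_rfl)]
  refine forall₄_congr fun s u hs hu => ?_
  have h_inter : StronglyMeasurable[mG] (μ⟦X ⁻¹' s ∩ Y ⁻¹' u | mG⟧) := stronglyMeasurable_condExp
  have h_mul : StronglyMeasurable[mG] fun ω => (μ⟦X ⁻¹' s | mG⟧) ω * (μ⟦Y ⁻¹' u | mG⟧) ω :=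
    stronglyMeasurable_condExp.mul stronglyMeasurable_condExp
  rw [← (key ((hX hs).inter (hY hu))).eventuallyEq_mul_iff (key (hX hs)) (key (hY hu)),
    ← h_inter.ae_eq_trim_iff hG h_mul, ← h_inter.ae_eq_trim_iff hG h_mul,
    trim_cond_eq_of_indep hG hH (indep_of_indep_of_le_left hInd hGF) ht ht₀]

end CondIndepFun

end ProbabilityTheory

theorem mcar_testwise_deletion_valid_general
    {Ω : Type*} [MeasurableSpace Ω] [StandardBorelSpace Ω]
    (μ : Measure Ω) [IsProbabilityMeasure μ]
    {βX βY βZ : Type*} [MeasurableSpace βX] [MeasurableSpace βY] [MeasurableSpace βZ]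
    (X : Ω → βX) (Y : Ω → βY) (Z : Ω → βZ) (R : Ω → Bool)
    (hX : Measurable X) (hY : Measurable Y) (hZ : Measurable Z) (hR : Measurable R)
    (hMCAR : IndepFun (fun ω => (X ω, Y ω, Z ω)) R μ)
    (hpos : 0 < μ (R ⁻¹' {false})) :
    (CondIndepFun (MeasurableSpace.comap Z inferInstance) hZ.comap_le X Y μ ↔
      CondIndepFun (MeasurableSpace.comap (fun ω => (Z ω, R ω)) inferInstance)
        ((hZ.prodMk hR).comap_le) X Y μ) ∧
    (CondIndepFun (MeasurableSpace.comap Z inferInstance) hZ.comap_le X Y μ ↔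
      CondIndepFun (MeasurableSpace.comap Z inferInstance) hZ.comap_le X Y
        (μ[|R ⁻¹' {false}])) := by
  set T := fun ω => (X ω, Y ω, Z ω)
  have hT : Measurable[MeasurableSpace.comap T inferInstance] T := comap_measurable T
  have hInd : Indep (MeasurableSpace.comap T inferInstance)
      (MeasurableSpace.comap R inferInstance) μ := hMCAR
  have hXT : Measurable[MeasurableSpace.comap T inferInstance] X := measurable_fst.comp hT
  have hYT : Measurable[MeasurableSpace.comap T inferInstance] Y :=
    (measurable_fst.comp measurable_snd).comp hT
  have hZT : MeasurableSpace.comap Z inferInstance ≤ MeasurableSpace.comap T inferInstance :=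
    ((measurable_snd.comp measurable_snd).comp hT).comap_le
  have hTΩ := (hX.prodMk (hY.prodMk hZ)).comap_le
  refine ⟨?_, condIndepFun_iff_condIndepFun_cond_of_indep hZT hTΩ hR.comap_le hInd hXT hYT
    ⟨{false}, measurableSet_singleton false, rfl⟩ hpos.ne'⟩
  convert condIndepFun_iff_condIndepFun_sup_of_indep hZT hTΩ hR.comap_le hInd hXT hYT using 2
  exact MeasurableSpace.comap_prodMk Z R

/-- MCAR validity of test-wise deletion: if the binary indicator `R`
is independent of `(X, Y, Z)` and `P(R = 0) > 0`, then `X ⫫ Y | Z` iff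
`X ⫫ Y | (Z, R)`, and moreover `X ⫫ Y | Z` under `P` iff `X ⫫ Y | Z` under the
conditional measure `P(· | R = 0)` (test-wise deletion). -/
theorem mcar_testwise_deletion_valid
    {Ω : Type*} [MeasurableSpace Ω] [StandardBorelSpace Ω] [Nonempty Ω]
    (μ : Measure Ω) [IsProbabilityMeasure μ]
    {βX βY βZ : Type*} [MeasurableSpace βX] [MeasurableSpace βY] [MeasurableSpace βZ]
    (X : Ω → βX) (Y : Ω → βY) (Z : Ω → βZ) (R : Ω → Bool)
    (hX : Measurable X) (hY : Measurable Y) (hZ : Measurable Z) (hR : Measurable R)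
    (hMCAR : IndepFun (fun ω => (X ω, Y ω, Z ω)) R μ)
    (hpos : 0 < μ (R ⁻¹' {false})) :
    (CondIndepFun (MeasurableSpace.comap Z inferInstance) hZ.comap_le X Y μ ↔
      CondIndepFun (MeasurableSpace.comap (fun ω => (Z ω, R ω)) inferInstance)
        ((hZ.prodMk hR).comap_le) X Y μ) ∧
    (CondIndepFun (MeasurableSpace.comap Z inferInstance) hZ.comap_le X Y μ ↔
      CondIndepFun (MeasurableSpace.comap Z inferInstance) hZ.comap_le X Y
        (μ[|R ⁻¹' {false}])) :=
  mcar_testwise_deletion_valid_general μ X Y Z R hX hY hZ hR hMCAR hpos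
end

section
/- Conditional independence transfer: if X ⫫ R | (Z, W) and W ⫫ R, and additionally X ⫫ Y | (Z, W, R = 0) under the conditional measure, with X ⫫ Y | (Z, W) ⟺ X ⫫ Y | (Z, W, R) guaranteed by (X, Y) ⫫ R | (Z, W), then X ⫫ Y | (Z, W) holds in the full (unconditioned) measure. Formally: if (X, Y) ⫫ R | (Z, W) and X ⫫ Y | (Z, W) in the measure P(· | R = 0) (with P(R=0) > 0 and P(R=0 | Z, W) > 0 a.s.), then X ⫫ Y | (Z, W) under P. -/
/-!
Write `m` for the σ-algebra of `(Z, W)` and `s = {R = false}`. If an event `A` is conditionally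
independent of `s` given `m`, then conditioning on `s` does not change `P(A | m)`: for `E ∈ m`,
`P(A ∩ s ∩ E) = ∫_E P(A | m) P(s | m) = ∫_{E ∩ s} P(A | m)`. Applied to `{X ∈ t₁}`, `{Y ∈ t₂}`
and their intersection, the factorisation of `P(· | m)` under `P(· | s)` becomes the factorisation
under `P`, but only `P(· | s)`-almost surely. Both sides are `m`-measurable, and an `m`-event that
is null under `P(· | s)` is null under `P` because `P(s | m) > 0` almost surely.
-/

open MeasureTheory ProbabilityTheory

section CondExpUnderCond

variable {Ω : Type*} {m mΩ : MeasurableSpace Ω} {μ : Measure Ω} {s A B D E : Set Ω}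

lemma setIntegral_cond {F : Type*} [NormedAddCommGroup F] [NormedSpace ℝ F]
    (hE : MeasurableSet E) (f : Ω → F) :
    ∫ x in E, f x ∂μ[|s] = (μ s)⁻¹.toReal • ∫ x in E ∩ s, f x ∂μ := by
  rw [ProbabilityTheory.cond, Measure.restrict_smul, Measure.restrict_restrict hE,
    integral_smul_measure]

variable [IsFiniteMeasure μ]

lemma setIntegral_condExp_indicator (hm : m ≤ mΩ) (hA : MeasurableSet A)
    (hE : MeasurableSet[m] E) :
    ∫ x in E, (μ⟦A | m⟧) x ∂μ = μ.real (E ∩ A) := by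
  rw [setIntegral_condExp hm ((integrable_const 1).indicator hA) hE, setIntegral_indicator hA,
    setIntegral_const, smul_eq_mul, mul_one]

lemma setIntegral_inter_eq_setIntegral_mul_condExp (hm : m ≤ mΩ) {f : Ω → ℝ}
    (hf : StronglyMeasurable[m] f) (hfi : Integrable f μ) (hs : MeasurableSet s)
    (hE : MeasurableSet[m] E) :
    ∫ x in E ∩ s, f x ∂μ = ∫ x in E, f x * (μ⟦s | m⟧) x ∂μ := by
  have hfs : s.indicator f = f * s.indicator fun _ => (1 : ℝ) := by
    funext x; by_cases hx : x ∈ s <;> simp [hx]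
  have hfsi : Integrable (f * s.indicator fun _ => (1 : ℝ)) μ := hfs ▸ hfi.indicator hs
  calc ∫ x in E ∩ s, f x ∂μ = ∫ x in E, (f * s.indicator fun _ => (1 : ℝ)) x ∂μ := by
        rw [← hfs, setIntegral_indicator hs]
    _ = ∫ x in E, μ[f * s.indicator fun _ => (1 : ℝ) | m] x ∂μ :=
        (setIntegral_condExp hm hfsi hE).symm
    _ = ∫ x in E, f x * (μ⟦s | m⟧) x ∂μ :=
        setIntegral_congr_ae (hm E hE) <|
          (condExp_mul_of_stronglyMeasurable_left hf hfsi
            ((integrable_const 1).indicator hs)).mono fun _ hx _ => hx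

lemma condExp_cond_ae_eq_condExp [StandardBorelSpace Ω] (hm : m ≤ mΩ) (hs : MeasurableSet s)
    (hμs : μ s ≠ 0) (hA : MeasurableSet A) (hAs : CondIndepSet m hm A s μ) :
    (μ[|s])⟦A | m⟧ =ᵐ[μ[|s]] μ⟦A | m⟧ := by
  have : IsProbabilityMeasure μ[|s] := cond_isProbabilityMeasure hμs
  rw [condIndepSet_iff _ _ _ _ hA hs] at hAs
  have hint : Integrable (μ⟦A | m⟧) μ[|s] :=
    integrable_condExp.restrict.smul_measure (by simp [hμs])
  refine (ae_eq_condExp_of_forall_setIntegral_eq hm ((integrable_const 1).indicator hA)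
    (fun _ _ _ => hint.integrableOn) (fun E hE _ => ?_)
    stronglyMeasurable_condExp.aestronglyMeasurable).symm
  calc ∫ x in E, (μ⟦A | m⟧) x ∂μ[|s]
      = (μ s)⁻¹.toReal * ∫ x in E ∩ s, (μ⟦A | m⟧) x ∂μ := setIntegral_cond (hm E hE) _
    _ = (μ s)⁻¹.toReal * ∫ x in E, (μ⟦A | m⟧) x * (μ⟦s | m⟧) x ∂μ := by
        rw [setIntegral_inter_eq_setIntegral_mul_condExp hm stronglyMeasurable_condExp
          integrable_condExp hs hE]
    _ = (μ s)⁻¹.toReal * ∫ x in E, (μ⟦A ∩ s | m⟧) x ∂μ := by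
        congr 1
        exact setIntegral_congr_ae (hm E hE) (hAs.mono fun _ hx _ => hx.symm)
    _ = (μ s)⁻¹.toReal * μ.real (E ∩ (A ∩ s)) := by
        rw [setIntegral_condExp_indicator hm (hA.inter hs) hE]
    _ = (μ[|s]).real (E ∩ A) := by
        rw [measureReal_def, measureReal_def, cond_apply hs, ENNReal.toReal_mul,
          Set.inter_comm s, Set.inter_assoc]
    _ = ∫ x in E, A.indicator (fun _ => (1 : ℝ)) x ∂μ[|s] := by
        rw [setIntegral_indicator hA, setIntegral_const, smul_eq_mul, mul_one]

lemma measure_eq_zero_of_measure_inter_eq_zero_of_condExp_pos (hm : m ≤ mΩ)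
    (hs : MeasurableSet s) (hpos : ∀ᵐ ω ∂μ, 0 < (μ⟦s | m⟧) ω) (hD : MeasurableSet[m] D)
    (hsD : μ (s ∩ D) = 0) : μ D = 0 := by
  have hint : ∫ x in D, (μ⟦s | m⟧) x ∂μ = 0 := by
    rw [setIntegral_condExp_indicator hm hs hD, measureReal_def, Set.inter_comm, hsD,
      ENNReal.toReal_zero]
  have hnonneg : 0 ≤ᵐ[μ.restrict D] μ⟦s | m⟧ :=
    ae_restrict_of_ae <| condExp_nonneg <| ae_of_all _ fun _ => Set.indicator_nonneg
      (fun _ _ => zero_le_one) _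
  have hzero : μ⟦s | m⟧ =ᵐ[μ.restrict D] 0 :=
    (integral_eq_zero_iff_of_nonneg_ae hnonneg integrable_condExp.integrableOn).mp hint
  have hfalse : ∀ᵐ x ∂μ.restrict D, False := by
    filter_upwards [hzero, ae_restrict_of_ae hpos] with x h0 hx
    exact (h0 ▸ hx).false
  exact Measure.restrict_eq_zero.mp (ae_eq_bot.mp (Filter.eventually_false_iff_eq_bot.mp hfalse))

lemma ae_eq_of_ae_eq_cond (hm : m ≤ mΩ) (hs : MeasurableSet s)
    (hpos : ∀ᵐ ω ∂μ, 0 < (μ⟦s | m⟧) ω) {f g : Ω → ℝ} (hf : StronglyMeasurable[m] f)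
    (hg : StronglyMeasurable[m] g) (hfg : f =ᵐ[μ[|s]] g) : f =ᵐ[μ] g := by
  have hD : MeasurableSet[m] {x | f x ≠ g x} :=
    (measurableSet_eq_fun hf.measurable hg.measurable).compl
  have hsD : μ[|s] {x | f x ≠ g x} = 0 := hfg
  rw [cond_apply hs, mul_eq_zero] at hsD
  exact measure_eq_zero_of_measure_inter_eq_zero_of_condExp_pos hm hs hpos hD
    (hsD.resolve_left (by simp [measure_ne_top]))

theorem condIndepSet_of_condIndepSet_cond [StandardBorelSpace Ω] (hm : m ≤ mΩ)
    (hs : MeasurableSet s) (hμs : μ s ≠ 0) (hpos : ∀ᵐ ω ∂μ, 0 < (μ⟦s | m⟧) ω)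
    (hA : MeasurableSet A) (hB : MeasurableSet B) (hAs : CondIndepSet m hm A s μ)
    (hBs : CondIndepSet m hm B s μ) (hABs : CondIndepSet m hm (A ∩ B) s μ)
    (hAB : CondIndepSet m hm A B μ[|s]) :
    CondIndepSet m hm A B μ := by
  rw [condIndepSet_iff _ _ _ _ hA hB] at hAB ⊢
  have hA' := condExp_cond_ae_eq_condExp hm hs hμs hA hAs
  have hB' := condExp_cond_ae_eq_condExp hm hs hμs hB hBs
  have hAB' := condExp_cond_ae_eq_condExp hm hs hμs (hA.inter hB) hABs
  refine ae_eq_of_ae_eq_cond hm hs hpos stronglyMeasurable_condExp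
    (stronglyMeasurable_condExp.mul stronglyMeasurable_condExp) ?_
  filter_upwards [hA', hB', hAB', hAB] with ω hAω hBω hABω hω
  rw [← hABω, hω, Pi.mul_apply, hAω, hBω, Pi.mul_apply]

lemma ae_pos_condExp_of_ae_pos_condExpKernel [StandardBorelSpace Ω] [Nonempty Ω]
    (hm : m ≤ mΩ) (hs : MeasurableSet s) (hpos : ∀ᵐ ω ∂μ, 0 < condExpKernel μ m ω s) :
    ∀ᵐ ω ∂μ, 0 < (μ⟦s | m⟧) ω := by
  filter_upwards [condExpKernel_ae_eq_condExp hm hs, hpos] with ω hω hωpos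
  rw [← hω]
  exact ENNReal.toReal_pos hωpos.ne' (measure_ne_top _ _)

end CondExpUnderCond

/-- conditional independence transfer: if `(X, Y) ⫫ R | (Z, W)`,
`P(R = 0) > 0`, `P(R = 0 | Z, W) > 0` a.s., and `X ⫫ Y | (Z, W)` holds under the
conditional (test-wise deleted) measure `P(· | R = 0)`, then `X ⫫ Y | (Z, W)`
holds under the full measure `P`. -/
theorem condIndep_transfer_from_deleted_data
    {Ω : Type*} [MeasurableSpace Ω] [StandardBorelSpace Ω] [Nonempty Ω]
    (μ : Measure Ω) [IsProbabilityMeasure μ]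
    {βX βY βZ βW : Type*} [MeasurableSpace βX] [MeasurableSpace βY]
    [MeasurableSpace βZ] [MeasurableSpace βW]
    (X : Ω → βX) (Y : Ω → βY) (Z : Ω → βZ) (W : Ω → βW) (R : Ω → Bool)
    (hX : Measurable X) (hY : Measurable Y) (hZ : Measurable Z) (hW : Measurable W)
    (hR : Measurable R)
    (hCI : CondIndepFun (MeasurableSpace.comap (fun ω => (Z ω, W ω)) inferInstance)
      ((hZ.prodMk hW).comap_le) (fun ω => (X ω, Y ω)) R μ)
    (hpos : 0 < μ (R ⁻¹' {false}))
    (hposZW : ∀ᵐ ω ∂μ, 0 < condExpKernel μ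
      (MeasurableSpace.comap (fun ω => (Z ω, W ω)) inferInstance) ω (R ⁻¹' {false}))
    (hdel : CondIndepFun (MeasurableSpace.comap (fun ω => (Z ω, W ω)) inferInstance)
      ((hZ.prodMk hW).comap_le) X Y (μ[|R ⁻¹' {false}])) :
    CondIndepFun (MeasurableSpace.comap (fun ω => (Z ω, W ω)) inferInstance)
      ((hZ.prodMk hW).comap_le) X Y μ := by
  have hm := (hZ.prodMk hW).comap_le
  have hs : MeasurableSet (R ⁻¹' {false}) := hR (measurableSet_singleton false)
  have hXR : CondIndepFun _ hm X R μ := hCI.comp measurable_fst measurable_id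
  have hYR : CondIndepFun _ hm Y R μ := hCI.comp measurable_snd measurable_id
  rw [condIndepFun_iff_condIndepSet_preimage (hX.prodMk hY) hR] at hCI
  rw [condIndepFun_iff_condIndepSet_preimage hX hR] at hXR
  rw [condIndepFun_iff_condIndepSet_preimage hY hR] at hYR
  rw [condIndepFun_iff_condIndepSet_preimage hX hY] at hdel ⊢
  intro t₁ t₂ ht₁ ht₂
  have hXYR := hCI _ _ (ht₁.prod ht₂) (measurableSet_singleton false)
  rw [Set.mk_preimage_prod] at hXYR
  exact condIndepSet_of_condIndepSet_cond hm hs hpos.ne'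
    (ae_pos_condExp_of_ae_pos_condExpKernel hm hs hposZW) (hX ht₁) (hY ht₂)
    (hXR t₁ _ ht₁ (measurableSet_singleton false)) (hYR t₂ _ ht₂ (measurableSet_singleton false))
    hXYR (hdel t₁ t₂ ht₁ ht₂)
end

section
/- In a DAG, if a node R has exactly one parent X and no children (structure X → R only), then for any node Y ≠ X, R: X is d-separated from Y given the empty set if and only if X is d-separated from Y given {R}. -/
/-!
`R` is adjacent to `X` alone, so it never lies in the interior of a simple path; conditioning
on `R` therefore blocks no path active given `∅`, and such a path (having no colliders) stays
active given `{R}`.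

Conversely, every collider `c` of a path active given `{R}` is an ancestor of `R` other than
`R`, hence an ancestor of `X`. Past its last collider `c` the path is collider-free, and
pushing its start along a directed path `c → ⋯ → X` (prepending each new vertex, or cutting
back to it when it already lies on the path) keeps it collider-free, since every added edge
points away from the path. This yields a collider-free path from `X` to `Y`, which is active
given `∅`.
-/

section

variable {α : Type*} {G : α → α → Prop} {x y c : α} {p : List α}

theorem IsAcyclic.asymm (hG : IsAcyclic G) {a b : α} (hab : G a b) : ¬ G b a :=
  fun hba => hG a (.head hab (.single hba))

/-- `IsUPath` without the length bound: shortcutting a walk along a directed path may pass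
through the one-vertex walk `[y]`. -/
def IsSimpleUWalk (G : α → α → Prop) (x y : α) (p : List α) : Prop :=
  p.head? = some x ∧ p.getLast? = some y ∧ p.Nodup ∧ p.IsChain (fun a b => G a b ∨ G b a)

def ColliderFree (G : α → α → Prop) (p : List α) : Prop :=
  ∀ i, 0 < i → i + 1 < p.length → ¬ ColliderAt G p i

theorem IsUPath.isSimpleUWalk (h : IsUPath G x y p) : IsSimpleUWalk G x y p := h.2

theorem IsUPath.ne (h : IsUPath G x y p) : x ≠ y := by
  obtain ⟨hlen, hx, hy, hnd, -⟩ := h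
  rcases p with _ | ⟨a, _ | ⟨b, t⟩⟩
  · simp at hlen
  · simp at hlen
  · rintro rfl
    simp only [List.head?_cons, Option.some.injEq] at hx
    subst hx
    have hmem : a ∈ b :: t := List.mem_of_getLast? (by simpa [List.getLast?_cons] using hy)
    exact (List.nodup_cons.1 hnd).1 hmem

theorem IsSimpleUWalk.isUPath_of_ne (h : IsSimpleUWalk G x y p) (hxy : x ≠ y) :
    IsUPath G x y p := by
  refine ⟨?_, h⟩
  obtain ⟨hx, hy, -⟩ := h
  rcases p with _ | ⟨a, _ | ⟨b, t⟩⟩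
  · simp at hx
  · simp only [List.head?_cons, List.getLast?_singleton, Option.some.injEq] at hx hy
    exact absurd (hx.symm.trans hy) hxy
  · simp

theorem IsSimpleUWalk.drop (h : IsSimpleUWalk G x y p) {i : ℕ} (hi : i < p.length) :
    IsSimpleUWalk G p[i] y (p.drop i) := by
  obtain ⟨-, hy, hnd, hch⟩ := h
  refine ⟨by simp [List.head?_drop, hi], ?_, (List.drop_sublist i p).nodup hnd, hch.drop i⟩
  rw [List.getLast?_drop, if_neg (by omega), hy]

theorem IsUPath.drop (h : IsUPath G x y p) {i : ℕ} (hi : i + 1 < p.length) :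
    IsUPath G (p[i]'(by omega)) y (p.drop i) :=
  ⟨by simp only [List.length_drop]; omega, h.isSimpleUWalk.drop _⟩

theorem IsSimpleUWalk.cons (h : IsSimpleUWalk G x y p) (hc : c ∉ p) (hadj : G c x ∨ G x c) :
    IsSimpleUWalk G c y (c :: p) := by
  obtain ⟨hx, hy, hnd, hch⟩ := h
  refine ⟨rfl, ?_, List.nodup_cons.2 ⟨hc, hnd⟩, List.isChain_cons.2 ⟨?_, hch⟩⟩
  · simp [List.getLast?_cons, hy]
  · intro z hz
    rw [hx, Option.mem_some_iff] at hz
    exact hz ▸ hadj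

theorem IsSimpleUWalk.getElem?_ne_of_forall_adj_eq {u v : α} (h : IsSimpleUWalk G x y p)
    (hv : ∀ w, G w v ∨ G v w → w = u) {i : ℕ} (hi0 : 0 < i) (hi1 : i + 1 < p.length) :
    p[i]? ≠ some v := by
  intro hpi
  obtain ⟨-, -, hnd, hch⟩ := h
  have hpv : p[i] = v := by simpa [List.getElem?_eq_getElem (show i < p.length by omega)] using hpi
  have hprev := List.isChain_iff_getElem.1 hch (i - 1) (by omega)
  have hnext := List.isChain_iff_getElem.1 hch i hi1
  simp only [show i - 1 + 1 = i by omega, hpv] at hprev hnext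
  have hprev_eq : p[i - 1] = u := hv _ hprev
  have hnext_eq : p[i + 1] = u := hv _ hnext.symm
  have := (hnd.getElem_inj_iff).1 (hprev_eq.trans hnext_eq.symm)
  omega

theorem colliderAt_drop_iff {i j : ℕ} (hj : 0 < j) :
    ColliderAt G (p.drop i) j ↔ ColliderAt G p (i + j) := by
  simp only [ColliderAt, List.getElem?_drop, show i + (j - 1) = i + j - 1 by omega,
    Nat.add_assoc]

theorem colliderAt_cons_succ_iff {i : ℕ} (hi : 0 < i) :
    ColliderAt G (c :: p) (i + 1) ↔ ColliderAt G p i := by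
  obtain ⟨k, rfl⟩ : ∃ k, i = k + 1 := ⟨i - 1, by omega⟩
  simp [ColliderAt]

theorem ColliderFree.drop (h : ColliderFree G p) (i : ℕ) : ColliderFree G (p.drop i) :=
  fun j hj0 hj1 hcol =>
    h (i + j) (by omega) (by simp only [List.length_drop] at hj1; omega)
      ((colliderAt_drop_iff hj0).1 hcol)

theorem ColliderFree.cons {b : α} (hG : IsAcyclic G) (h : ColliderFree G p)
    (hp : p.head? = some b) (hbc : G b c) : ColliderFree G (c :: p) := by
  rintro (_ | _ | i) hi0 hi1 hcol
  · omega
  · obtain ⟨a, b', -, ha, hb', -, hab', -⟩ := hcol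
    simp only [Nat.sub_self, List.getElem?_cons_succ, ← List.head?_eq_getElem?, hp,
      List.head?_cons, Option.some.injEq] at ha hb'
    subst ha hb'
    exact hG.asymm hbc hab'
  · exact h (i + 1) (by omega) (by simpa using hi1) ((colliderAt_cons_succ_iff (by omega)).1 hcol)

theorem exists_colliderFree_walk_of_reflTransGen {b : α} (hG : IsAcyclic G)
    (hbx : Relation.ReflTransGen G b x) :
    ∀ q, IsSimpleUWalk G b y q → ColliderFree G q →
      ∃ q', IsSimpleUWalk G x y q' ∧ ColliderFree G q' := by
  induction hbx using Relation.ReflTransGen.head_induction_on with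
  | refl => exact fun q hq hfree => ⟨q, hq, hfree⟩
  | @head a c hac _ ih =>
    intro q hq hfree
    by_cases hcq : c ∈ q
    · obtain ⟨i, hi, rfl⟩ := List.getElem_of_mem hcq
      exact ih _ (hq.drop hi) (hfree.drop i)
    · exact ih _ (hq.cons hcq (Or.inr hac)) (hfree.cons hG hq.1 hac)

theorem exists_colliderFree_path_of_colliders_reflTransGen (hG : IsAcyclic G) (hxy : x ≠ y)
    {b : α} (q : List α) (hq : IsUPath G b y q) (hbx : Relation.ReflTransGen G b x)
    (hcol : ∀ i, 0 < i → i + 1 < q.length → ColliderAt G q i →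
      ∀ c, q[i]? = some c → Relation.ReflTransGen G c x) :
    ∃ p, IsUPath G x y p ∧ ColliderFree G p := by
  by_cases hfree : ColliderFree G q
  · obtain ⟨p, hp, hpfree⟩ :=
      exists_colliderFree_walk_of_reflTransGen hG hbx q hq.isSimpleUWalk hfree
    exact ⟨p, hp.isUPath_of_ne hxy, hpfree⟩
  · simp only [ColliderFree, not_forall, not_not] at hfree
    obtain ⟨i, hi0, hi1, hcoll⟩ := hfree
    refine exists_colliderFree_path_of_colliders_reflTransGen hG hxy (q.drop i) (hq.drop hi1)
      (hcol i hi0 hi1 hcoll _ (List.getElem?_eq_getElem _)) ?_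
    intro j hj0 hj1 hcolj c hc
    rw [List.getElem?_drop] at hc
    rw [List.length_drop] at hj1
    exact hcol (i + j) (by omega) (by omega) ((colliderAt_drop_iff hj0).1 hcolj) c hc
termination_by q.length
decreasing_by simp only [List.length_drop]; omega

theorem ActivePath.of_colliderFree {S : Set α} (hp : IsUPath G x y p) (hfree : ColliderFree G p)
    (hS : ∀ i, 0 < i → i + 1 < p.length → ∀ b, p[i]? = some b → b ∉ S) :
    ActivePath G S x y p :=
  ⟨hp, fun i hi0 hi1 b hb =>
    ⟨fun hcol => (hfree i hi0 hi1 hcol).elim, fun _ => hS i hi0 hi1 b hb⟩⟩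

theorem activePath_empty_iff : ActivePath G ∅ x y p ↔ IsUPath G x y p ∧ ColliderFree G p := by
  refine ⟨fun ⟨hp, hact⟩ => ⟨hp, fun i hi0 hi1 hcol => ?_⟩,
    fun ⟨hp, hfree⟩ => .of_colliderFree hp hfree fun _ _ _ _ _ => Set.notMem_empty _⟩
  simpa using (hact i hi0 hi1 _ (List.getElem?_eq_getElem (by omega))).1 hcol

end

theorem selfmask_single_cause_dsep_iff_general {α : Type*} (G : α → α → Prop)
    (hG : IsAcyclic G) (X R : α)
    (hparent : ∀ w, G w R ↔ w = X) (hleaf : IsLeaf G R)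
    (Y : α) :
    (DSep G X Y (∅ : Set α) ↔ DSep G X Y ({R} : Set α)) := by
  have hR_not_interior :
      ∀ p, IsUPath G X Y p → ∀ i, 0 < i → i + 1 < p.length → p[i]? ≠ some R :=
    fun p hp _ hi0 hi1 => hp.isSimpleUWalk.getElem?_ne_of_forall_adj_eq
      (fun w hw => hw.elim (hparent w).1 fun h => (hleaf w h).elim) hi0 hi1
  constructor
  · intro hsep p ⟨hp, hact⟩
    suffices hcol : ∀ i, 0 < i → i + 1 < p.length → ColliderAt G p i →
        ∀ c, p[i]? = some c → Relation.ReflTransGen G c X by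
      obtain ⟨q, hq, hfree⟩ :=
        exists_colliderFree_path_of_colliders_reflTransGen hG hp.ne p hp .refl hcol
      exact hsep q (activePath_empty_iff.2 ⟨hq, hfree⟩)
    intro i hi0 hi1 hcol c hc
    have hcR : Relation.ReflTransGen G c R := by
      rcases (hact i hi0 hi1 c hc).1 hcol with rfl | ⟨d, rfl, hcd⟩
      exacts [.refl, hcd]
    rcases hcR.cases_tail with rfl | ⟨d, hcd, hdR⟩
    · exact absurd hc (hR_not_interior p hp i hi0 hi1)
    · exact (hparent d).1 hdR ▸ hcd
  · intro hsep p hp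
    obtain ⟨hpath, hfree⟩ := activePath_empty_iff.1 hp
    exact hsep p (.of_colliderFree hpath hfree fun i hi0 hi1 b hb hbR =>
      hR_not_interior p hpath i hi0 hi1 (hbR ▸ hb))

/-- in a DAG, if node `R` has exactly one parent `X` and no children
(structure `X → R` only), then for any node `Y` distinct from `X` and `R`,
`X` is d-separated from `Y` given `∅` iff `X` is d-separated from `Y` given `{R}`. -/
theorem selfmask_single_cause_dsep_iff {α : Type*} (G : α → α → Prop)
    (hG : IsAcyclic G) (X R : α)
    (hparent : ∀ w, G w R ↔ w = X) (hleaf : IsLeaf G R)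
    (Y : α) (hYX : Y ≠ X) (hYR : Y ≠ R) :
    (DSep G X Y (∅ : Set α) ↔ DSep G X Y ({R} : Set α)) :=
  selfmask_single_cause_dsep_iff_general G hG X R hparent hleaf Y
end

section
/- Selection/conditioning preserves CI under d-separation from the selection variable: let X, Y, Z, S be random variables with S binary, and suppose (X, Y) ⫫ S | Z and P(S = 0 | Z) > 0 a.s. Then X ⫫ Y | Z holds under P if and only if X ⫫ Y | Z holds under the conditional measure P(· | S = 0). -/
/-!
Write `F = {S = false}` and `ν = P(· | F)`. Conditional independence of `(X, Y)` and `S` given `Z`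
says `P(E ∩ F | Z) = P(E | Z) P(F | Z)` for every event `E` of `(X, Y)`, and by Bayes' formula this
is exactly what makes `ν(E | Z) = P(E | Z)` `ν`-a.s. Since `P(F | Z) > 0` a.s., `P` and `ν` have the
same null sets among `Z`-measurable events, so the product formula `P(X ∈ A, Y ∈ B | Z) =
P(X ∈ A | Z) P(Y ∈ B | Z)`, an identity between `Z`-measurable functions, holds `P`-a.s. iff it
holds `ν`-a.s.
-/

open MeasureTheory ProbabilityTheory

namespace ProbabilityTheory

variable {Ω : Type*} {m mΩ : MeasurableSpace Ω} {μ : Measure Ω} {F : Set Ω}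

theorem setIntegral_mul_condExp (hm : m ≤ mΩ) [SigmaFinite (μ.trim hm)] {f g : Ω → ℝ}
    (hg : StronglyMeasurable[m] g) (hgf : Integrable (g * f) μ) (hf : Integrable f μ)
    {s : Set Ω} (hs : MeasurableSet[m] s) :
    ∫ ω in s, g ω * μ[f | m] ω ∂μ = ∫ ω in s, g ω * f ω ∂μ := by
  refine (setIntegral_congr_ae (hm s hs) ?_).trans (setIntegral_condExp hm hgf hs)
  exact (condExp_mul_of_stronglyMeasurable_left hg hgf hf).mono fun ω h _ => h.symm

theorem setIntegral_cond {s : Set Ω} (hs : MeasurableSet s) (f : Ω → ℝ) :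
    ∫ ω in s, f ω ∂μ[|F] = (μ F)⁻¹.toReal * ∫ ω in s ∩ F, f ω ∂μ := by
  rw [cond, Measure.restrict_smul, integral_smul_measure, Measure.restrict_restrict hs,
    smul_eq_mul]

theorem measure_eq_zero_of_measure_inter_eq_zero_of_condExp_pos (hm : m ≤ mΩ)
    [IsFiniteMeasure μ] (hF : MeasurableSet F) (hpos : ∀ᵐ ω ∂μ, 0 < (μ⟦F | m⟧) ω)
    {N : Set Ω} (hN : MeasurableSet[m] N) (hFN : μ (F ∩ N) = 0) : μ N = 0 := by
  have hint : ∫ ω in N, (μ⟦F | m⟧) ω ∂μ = 0 := by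
    rw [setIntegral_condExp hm ((integrable_const 1).indicator hF) hN, setIntegral_indicator hF,
      setIntegral_const, Set.inter_comm, measureReal_def, hFN]
    simp
  have hzero : μ⟦F | m⟧ =ᵐ[μ.restrict N] 0 :=
    (integral_eq_zero_iff_of_nonneg_ae (ae_restrict_of_ae (condExp_nonneg
      (.of_forall (Set.indicator_nonneg fun _ _ => zero_le_one))))
      integrable_condExp.integrableOn).mp hint
  rw [← Measure.restrict_eq_zero, ← ae_eq_bot, ← Filter.eventually_false_iff_eq_bot]
  filter_upwards [hzero, ae_restrict_of_ae hpos] with ω h0 hp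
  exact hp.ne' h0

theorem ae_cond_iff_of_condExp_pos (hm : m ≤ mΩ) [IsFiniteMeasure μ] (hF : MeasurableSet F)
    (hpos : ∀ᵐ ω ∂μ, 0 < (μ⟦F | m⟧) ω) {p : Ω → Prop} (hp : MeasurableSet[m] {ω | p ω}) :
    (∀ᵐ ω ∂μ[|F], p ω) ↔ ∀ᵐ ω ∂μ, p ω := by
  refine ⟨fun h => ?_, fun h => cond_absolutelyContinuous.ae_le h⟩
  rw [ae_iff, cond_apply hF] at h
  exact ae_iff.mpr <| measure_eq_zero_of_measure_inter_eq_zero_of_condExp_pos hm hF hpos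
    hp.compl <| (mul_eq_zero.mp h).resolve_left (ENNReal.inv_ne_zero.mpr (measure_ne_top μ F))

theorem condExp_cond_ae_eq_condExp (hm : m ≤ mΩ) [IsFiniteMeasure μ] (hF : MeasurableSet F)
    {f : Ω → ℝ} (hf : Integrable f μ)
    (hfF : μ[F.indicator f | m] =ᵐ[μ] fun ω => μ[f | m] ω * (μ⟦F | m⟧) ω) :
    (μ[|F])[f | m] =ᵐ[μ[|F]] μ[f | m] := by
  rcases eq_or_ne (μ F) 0 with hF0 | hF0
  · simp [cond_eq_zero_of_meas_eq_zero hF0, Filter.EventuallyEq]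
  have hint : ∀ {g : Ω → ℝ}, Integrable g μ → Integrable g μ[|F] := fun hg =>
    (hg.restrict (s := F)).smul_measure (ENNReal.inv_ne_top.mpr hF0)
  refine (ae_eq_condExp_of_forall_setIntegral_eq hm (hint hf)
    (fun s _ _ => (hint integrable_condExp).integrableOn) (fun s hs _ => ?_)
    stronglyMeasurable_condExp.aestronglyMeasurable).symm
  rw [setIntegral_cond (hm s hs), setIntegral_cond (hm s hs)]
  congr 1
  have hprod : (fun ω => μ[f | m] ω * F.indicator (fun _ => (1 : ℝ)) ω) =
      F.indicator (μ[f | m]) := by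
    funext ω
    simpa using (Set.indicator_mul_right F (μ[f | m]) fun _ => (1 : ℝ)).symm
  have hprod_int : Integrable (μ[f | m] * F.indicator fun _ => (1 : ℝ)) μ :=
    (integrable_condExp.indicator hF).congr (.of_forall fun ω => (congrFun hprod ω).symm)
  calc ∫ ω in s ∩ F, μ[f | m] ω ∂μ
      = ∫ ω in s, μ[f | m] ω * F.indicator (fun _ => (1 : ℝ)) ω ∂μ := by
        rw [hprod, setIntegral_indicator hF]
    _ = ∫ ω in s, μ[f | m] ω * (μ⟦F | m⟧) ω ∂μ :=
        (setIntegral_mul_condExp hm stronglyMeasurable_condExp hprod_int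
          ((integrable_const 1).indicator hF) hs).symm
    _ = ∫ ω in s, μ[F.indicator f | m] ω ∂μ :=
        setIntegral_congr_ae (hm s hs) (hfF.mono fun ω h _ => h.symm)
    _ = ∫ ω in s ∩ F, f ω ∂μ := by
        rw [setIntegral_condExp hm (hf.indicator hF) hs, setIntegral_indicator hF]

theorem condIndepFun_iff_condIndepFun_cond [StandardBorelSpace Ω] (hm : m ≤ mΩ)
    [IsFiniteMeasure μ] {β β' γ : Type*} [MeasurableSpace β] [MeasurableSpace β']
    [MeasurableSpace γ] {X : Ω → β} {Y : Ω → β'} {S : Ω → γ}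
    (hX : Measurable X) (hY : Measurable Y) (hS : Measurable S)
    (hCI : CondIndepFun m hm (fun ω => (X ω, Y ω)) S μ) {t : Set γ} (ht : MeasurableSet t)
    (hpos : ∀ᵐ ω ∂μ, 0 < (μ⟦S ⁻¹' t | m⟧) ω) :
    CondIndepFun m hm X Y μ ↔ CondIndepFun m hm X Y μ[|S ⁻¹' t] := by
  have hF : MeasurableSet (S ⁻¹' t) := hS ht
  have hcond : ∀ A B, MeasurableSet A → MeasurableSet B →
      ((μ[|S ⁻¹' t])⟦X ⁻¹' A ∩ Y ⁻¹' B | m⟧) =ᵐ[μ[|S ⁻¹' t]] μ⟦X ⁻¹' A ∩ Y ⁻¹' B | m⟧ := by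
    intro A B hA hB
    have hfact := (condIndepFun_iff_condExp_inter_preimage_eq_mul (hX.prodMk hY) hS).mp hCI
      (A ×ˢ B) t (hA.prod hB) ht
    rw [Set.mk_preimage_prod, Set.inter_comm _ (S ⁻¹' t)] at hfact
    exact condExp_cond_ae_eq_condExp hm hF
      ((integrable_const 1).indicator ((hX hA).inter (hY hB)))
      (by rwa [Set.indicator_indicator])
  rw [condIndepFun_iff_condExp_inter_preimage_eq_mul hX hY,
    condIndepFun_iff_condExp_inter_preimage_eq_mul hX hY]
  refine forall₄_congr fun A B hA hB => ?_
  have hcondX := hcond A Set.univ hA .univ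
  have hcondY := hcond Set.univ B .univ hB
  simp only [Set.preimage_univ, Set.inter_univ, Set.univ_inter] at hcondX hcondY
  exact (ae_cond_iff_of_condExp_pos hm hF hpos (measurableSet_eq_fun
    stronglyMeasurable_condExp.measurable
    (stronglyMeasurable_condExp.mul stronglyMeasurable_condExp).measurable)).symm.trans
    ((hcond A B hA hB).congr_left.trans (hcondX.mul hcondY).congr_right).symm

end ProbabilityTheory

theorem selection_preserves_condIndep_general
    {Ω : Type*} [MeasurableSpace Ω] [StandardBorelSpace Ω] [Nonempty Ω]
    (μ : Measure Ω) [IsProbabilityMeasure μ]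
    {βX βY βZ : Type*} [MeasurableSpace βX] [MeasurableSpace βY] [MeasurableSpace βZ]
    (X : Ω → βX) (Y : Ω → βY) (Z : Ω → βZ) (S : Ω → Bool)
    (hX : Measurable X) (hY : Measurable Y) (hZ : Measurable Z) (hS : Measurable S)
    (hCI : CondIndepFun (MeasurableSpace.comap Z inferInstance) hZ.comap_le
      (fun ω => (X ω, Y ω)) S μ)
    (hposZ : ∀ᵐ ω ∂μ, 0 < condExpKernel μ (MeasurableSpace.comap Z inferInstance) ω
      (S ⁻¹' {false})) :
    (CondIndepFun (MeasurableSpace.comap Z inferInstance) hZ.comap_le X Y μ ↔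
      CondIndepFun (MeasurableSpace.comap Z inferInstance) hZ.comap_le X Y
        (μ[|S ⁻¹' {false}])) := by
  have hF : MeasurableSet (S ⁻¹' {false}) := hS (measurableSet_singleton false)
  refine condIndepFun_iff_condIndepFun_cond hZ.comap_le hX hY hS hCI
    (measurableSet_singleton false) ?_
  filter_upwards [hposZ, condExpKernel_ae_eq_condExp hZ.comap_le hF] with ω hkernel heq
  exact heq ▸ ENNReal.toReal_pos hkernel.ne' (measure_ne_top _ _)

/-- conditioning preserves CI given CI from the selection variable:
if `(X, Y) ⫫ S | Z`, `P(S = 0 | Z) > 0` a.s., and `P(S = 0) > 0`, then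
`X ⫫ Y | Z` under `P` iff `X ⫫ Y | Z` under the conditional measure `P(· | S = 0)`. -/
theorem selection_preserves_condIndep
    {Ω : Type*} [MeasurableSpace Ω] [StandardBorelSpace Ω] [Nonempty Ω]
    (μ : Measure Ω) [IsProbabilityMeasure μ]
    {βX βY βZ : Type*} [MeasurableSpace βX] [MeasurableSpace βY] [MeasurableSpace βZ]
    (X : Ω → βX) (Y : Ω → βY) (Z : Ω → βZ) (S : Ω → Bool)
    (hX : Measurable X) (hY : Measurable Y) (hZ : Measurable Z) (hS : Measurable S)
    (hCI : CondIndepFun (MeasurableSpace.comap Z inferInstance) hZ.comap_le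
      (fun ω => (X ω, Y ω)) S μ)
    (hposZ : ∀ᵐ ω ∂μ, 0 < condExpKernel μ (MeasurableSpace.comap Z inferInstance) ω
      (S ⁻¹' {false}))
    (hpos : 0 < μ (S ⁻¹' {false})) :
    (CondIndepFun (MeasurableSpace.comap Z inferInstance) hZ.comap_le X Y μ ↔
      CondIndepFun (MeasurableSpace.comap Z inferInstance) hZ.comap_le X Y
        (μ[|S ⁻¹' {false}])) :=
  selection_preserves_condIndep_general μ X Y Z S hX hY hZ hS hCI hposZ
end
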